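/- Let q ≥ 1 and r ≥ 1 be integers, let a ∈ ℝ, and let δ be a real number with 0 < δ < 1/(2q). Then lim_{M→∞} ∫_{r/q - δ}^{r/q + δ} e^{2πiax} · sin((2M+1)πqx) / sin(πqx) dx = (1/q) · e^{2πiar/q}. -/

import Mathlib

/-!
The kernel `D_M(x) = sin((2M+1)πqx) / sin(πqx)` is `1/q`-periodic, so translating by `r/q`
reduces the claim to `∫_{-δ}^{δ} e^{2πiax} D_M(x) dx → 1/q`. Since
`D_M = 1 + 2 ∑_{m=1}^{M} cos(2mπqx)` off a null set, its integral over the period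
`[-1/(2q), 1/(2q)]` is exactly `1/q`. Everything else is of the form
`∫ g(x) sin((2M+1)πqx) dx` with `g` integrable, hence tends to `0` by Riemann–Lebesgue: on
`δ ≤ |x| ≤ 1/(2q)` take `g = 1/sin(πqx)`, and on `|x| ≤ δ` take `g = (e^{2πiax} - 1)/sin(πqx)`,
which is bounded by Jordan's inequality `|sin(πqx)| ≥ 2q|x|`.
-/

open MeasureTheory Real Filter Topology FourierTransform

theorem sin_two_mul_add_one_mul (M : ℕ) (t : ℝ) :
    sin ((2 * M + 1) * t) = sin t * (1 + 2 * ∑ m ∈ Finset.range M, cos (2 * (m + 1) * t)) := by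
  induction M with
  | zero => simp
  | succ M ih =>
    have hdiff : sin ((2 * (M + 1) + 1) * t) - sin ((2 * M + 1) * t) =
        2 * sin t * cos (2 * (M + 1) * t) := by
      rw [show (2 * (M + 1) + 1) * t = 2 * (M + 1) * t + t by ring,
        show (2 * M + 1) * t = 2 * (M + 1) * t - t by ring, sin_add, sin_sub]
      ring
    rw [Finset.sum_range_succ]
    push_cast
    linear_combination ih + hdiff

-- Where `sin (π q x) = 0` the convention `y / 0 = 0` makes the kernel vanish instead of taking
-- the value `2M+1`; this only happens on a null set.
noncomputable def dirichletKernel (q : ℝ) (M : ℕ) (x : ℝ) : ℝ :=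
  sin ((2 * M + 1) * π * q * x) / sin (π * q * x)

theorem volume_setOf_sin_pi_mul_eq_zero {q : ℝ} (hq : q ≠ 0) :
    volume {x : ℝ | sin (π * q * x) = 0} = 0 := by
  refine measure_mono_null (fun x hx => ?_)
    ((Set.countable_range fun n : ℤ => (n : ℝ) / q).measure_zero _)
  obtain ⟨n, hn⟩ := sin_eq_zero_iff.mp hx
  exact ⟨n, by rw [div_eq_iff hq]; apply mul_left_cancel₀ pi_ne_zero; linarith⟩

theorem dirichletKernel_ae_eq {q : ℝ} (hq : q ≠ 0) (M : ℕ) :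
    dirichletKernel q M =ᵐ[volume]
      fun x => 1 + 2 * ∑ m ∈ Finset.range M, cos (2 * (m + 1) * (π * q * x)) := by
  have hne : ∀ᵐ x : ℝ, sin (π * q * x) ≠ 0 := measure_eq_zero_iff_ae_notMem.mp
    (volume_setOf_sin_pi_mul_eq_zero hq)
  filter_upwards [hne] with x hx
  rw [dirichletKernel, show (2 * M + 1) * π * q * x = (2 * M + 1) * (π * q * x) by ring,
    sin_two_mul_add_one_mul, mul_div_cancel_left₀ _ hx]

theorem intervalIntegrable_dirichletKernel {q : ℝ} (hq : q ≠ 0) (M : ℕ) (a b : ℝ) :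
    IntervalIntegrable (dirichletKernel q M) volume a b := by
  have hcont : Continuous fun x : ℝ =>
      1 + 2 * ∑ m ∈ Finset.range M, cos (2 * (m + 1) * (π * q * x)) := by fun_prop
  exact (hcont.intervalIntegrable a b).congr_ae
    ((dirichletKernel_ae_eq hq M).symm.filter_mono ae_restrict_le)

theorem integral_cos_mul_succ_pi_mul {q : ℝ} (hq : q ≠ 0) (m : ℕ) :
    ∫ x in -(1 / (2 * q))..1 / (2 * q), cos (2 * (m + 1) * (π * q * x)) = 0 := by
  have hk : 2 * (m + 1) * π * q ≠ 0 := by positivity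
  simp_rw [show ∀ x, 2 * (m + 1) * (π * q * x) = 2 * (m + 1) * π * q * x by intro x; ring]
  rw [intervalIntegral.integral_comp_mul_left (fun x => cos x) hk, integral_cos,
    show 2 * (m + 1) * π * q * (1 / (2 * q)) = ((m + 1 : ℕ) : ℝ) * π by
      push_cast; field_simp,
    show 2 * (m + 1) * π * q * -(1 / (2 * q)) = -(((m + 1 : ℕ) : ℝ) * π) by
      push_cast; field_simp,
    sin_neg, sin_nat_mul_pi]
  simp

theorem integral_dirichletKernel {q : ℝ} (hq : q ≠ 0) (M : ℕ) :
    ∫ x in -(1 / (2 * q))..1 / (2 * q), dirichletKernel q M x = 1 / q := by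
  rw [intervalIntegral.integral_congr_ae ((dirichletKernel_ae_eq hq M).mono fun x hx _ => hx),
    intervalIntegral.integral_add intervalIntegrable_const
      ((by fun_prop : Continuous _).intervalIntegrable _ _),
    intervalIntegral.integral_const_mul, intervalIntegral.integral_finsetSum
      fun m _ => (by fun_prop : Continuous _).intervalIntegrable _ _]
  simp only [integral_cos_mul_succ_pi_mul hq, Finset.sum_const_zero,
    intervalIntegral.integral_const, smul_eq_mul]
  ring

theorem dirichletKernel_add_int_div {q : ℝ} (hq : q ≠ 0) (M : ℕ) (r : ℤ) (x : ℝ) :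
    dirichletKernel q M (x + r / q) = dirichletKernel q M x := by
  have hnum : (2 * M + 1) * π * q * (x + r / q) =
      (2 * M + 1) * π * q * x + ((2 * M + 1) * r : ℤ) * π := by
    push_cast; field_simp
  have hden : π * q * (x + r / q) = π * q * x + r * π := by field_simp
  rw [dirichletKernel, dirichletKernel, hnum, hden, sin_add_int_mul_pi, sin_add_int_mul_pi,
    zpow_mul, (odd_two_mul_add_one (M : ℤ)).neg_one_zpow]
  exact mul_div_mul_left _ _ (zpow_ne_zero _ (by norm_num))

theorem tendsto_integral_mul_sin_cocompact {g : ℝ → ℂ} (hg : Integrable g) :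
    Tendsto (fun t : ℝ => ∫ x, g x * sin (t * x)) (cocompact ℝ) (𝓝 0) := by
  have hc : (2 * π)⁻¹ ≠ 0 := by positivity
  have hpos := (Real.zero_at_infty_fourier g).comp
    (Homeomorph.mulLeft₀ _ hc).isClosedEmbedding.tendsto_cocompact
  have hneg := (Real.zero_at_infty_fourier g).comp
    (Homeomorph.mulLeft₀ _ (neg_ne_zero.mpr hc)).isClosedEmbedding.tendsto_cocompact
  have hint : ∀ w : ℝ, Integrable fun x => 𝐞 (-(x * w)) • g x := fun w => by
    simpa [mul_comm] using (Real.fourierIntegral_convergent_iff w).2 hg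
  -- `sin θ = i (e^{-iθ} - e^{iθ}) / 2`, and `𝓕 g (w / 2π)` integrates `g` against `e^{-iwx}`.
  have key : ∀ t : ℝ, ∫ x, g x * sin (t * x) =
      Complex.I / 2 * (𝓕 g ((2 * π)⁻¹ * t) - 𝓕 g (-(2 * π)⁻¹ * t)) := by
    intro t
    rw [Real.fourier_real_eq, Real.fourier_real_eq, ← integral_sub (hint _) (hint _),
      ← integral_const_mul]
    congr 1 with x
    rw [Circle.smul_def, Circle.smul_def, Real.fourierChar_apply, Real.fourierChar_apply,
      smul_eq_mul, smul_eq_mul, Complex.ofReal_sin, Complex.sin]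
    rw [show ((2 * π * -(x * ((2 * π)⁻¹ * t)) : ℝ) : ℂ) = -(t * x) by push_cast; field_simp,
      show ((2 * π * -(x * (-(2 * π)⁻¹ * t)) : ℝ) : ℂ) = t * x by push_cast; field_simp]
    push_cast
    ring
  simp_rw [key]
  simpa using (hpos.sub hneg).const_mul (Complex.I / 2)

theorem tendsto_intervalIntegral_mul_sin_cocompact {g : ℝ → ℂ} {a b : ℝ}
    (hg : IntervalIntegrable g volume a b) :
    Tendsto (fun t : ℝ => ∫ x in a..b, g x * sin (t * x)) (cocompact ℝ) (𝓝 0) := by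
  have hset : ∀ {s : Set ℝ}, MeasurableSet s → IntegrableOn g s →
      Tendsto (fun t : ℝ => ∫ x in s, g x * sin (t * x)) (cocompact ℝ) (𝓝 0) := fun hs hgs => by
    simp_rw [← integral_indicator hs, Set.indicator_mul_left]
    exact tendsto_integral_mul_sin_cocompact ((integrable_indicator_iff hs).mpr hgs)
  simpa only [intervalIntegral, sub_zero] using
    (hset measurableSet_Ioc hg.1).sub (hset measurableSet_Ioc hg.2)

theorem tendsto_two_mul_add_one_mul_cocompact {c : ℝ} (hc : c ≠ 0) :
    Tendsto (fun M : ℕ => (2 * M + 1) * c) atTop (cocompact ℝ) := by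
  have h : Tendsto (fun M : ℕ => (2 * M + 1 : ℝ)) atTop atTop :=
    tendsto_atTop_add_const_right _ _ (tendsto_natCast_atTop_atTop.const_mul_atTop two_pos)
  exact (Homeomorph.mulRight₀ c hc).isClosedEmbedding.tendsto_cocompact.comp
    (h.mono_right atTop_le_cocompact)

theorem tendsto_integral_mul_dirichletKernel {q a b : ℝ} (hq : q ≠ 0) {g : ℝ → ℂ}
    (hg : IntervalIntegrable (fun x => g x / sin (π * q * x)) volume a b) :
    Tendsto (fun M : ℕ => ∫ x in a..b, g x * dirichletKernel q M x) atTop (𝓝 0) := by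
  have h := (tendsto_intervalIntegral_mul_sin_cocompact hg).comp
    (tendsto_two_mul_add_one_mul_cocompact (mul_ne_zero pi_ne_zero hq))
  refine h.congr fun M => intervalIntegral.integral_congr fun x _ => ?_
  simp only [dirichletKernel, Complex.ofReal_div]
  ring_nf

theorem two_mul_abs_le_abs_sin_pi_mul {q x : ℝ} (hq : 0 < q) (hx : |x| ≤ 1 / (2 * q)) :
    2 * q * |x| ≤ |sin (π * q * x)| := by
  have harg : |π * q * x| = π * q * |x| := by
    rw [abs_mul, abs_mul, abs_of_pos pi_pos, abs_of_pos hq]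
  have hle : |π * q * x| ≤ π / 2 := by
    rw [harg]
    calc π * q * |x| ≤ π * q * (1 / (2 * q)) := by gcongr
      _ = π / 2 := by field_simp
  calc 2 * q * |x| = 2 / π * |π * q * x| := by rw [harg]; field_simp
    _ ≤ |sin (π * q * x)| := mul_abs_le_abs_sin hle

theorem norm_exp_sub_one_div_sin_le {q x : ℝ} (hq : 0 < q) (hx : |x| ≤ 1 / (2 * q)) (a : ℝ) :
    ‖(Complex.exp (2 * π * Complex.I * a * x) - 1) / sin (π * q * x)‖ ≤ π * |a| / q := by
  have hnum : ‖Complex.exp (2 * π * Complex.I * a * x) - 1‖ ≤ 2 * π * |a| * |x| := by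
    have h := Real.norm_exp_I_mul_ofReal_sub_one_le (x := 2 * π * a * x)
    rw [show Complex.I * ((2 * π * a * x : ℝ) : ℂ) = 2 * π * Complex.I * a * x by
        push_cast; ring,
      Real.norm_eq_abs, abs_mul, abs_mul, abs_mul, abs_two, abs_of_pos pi_pos] at h
    exact h
  rw [norm_div, Complex.norm_real, Real.norm_eq_abs]
  refine div_le_of_le_mul₀ (abs_nonneg _) (by positivity) ?_
  calc _ ≤ 2 * π * |a| * |x| := hnum
    _ = π * |a| / q * (2 * q * |x|) := by field_simp
    _ ≤ π * |a| / q * |sin (π * q * x)| := by gcongr; exact two_mul_abs_le_abs_sin_pi_mul hq hx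

theorem tendsto_integral_dirichletKernel_of_sin_ne_zero {q a b : ℝ} (hq : q ≠ 0)
    (hsin : ∀ x ∈ Set.uIcc a b, sin (π * q * x) ≠ 0) :
    Tendsto (fun M : ℕ => ∫ x in a..b, (dirichletKernel q M x : ℂ)) atTop (𝓝 0) := by
  have hcont : ContinuousOn (fun x => (1 : ℂ) / sin (π * q * x)) (Set.uIcc a b) :=
    continuousOn_const.div (by fun_prop) fun x hx => Complex.ofReal_ne_zero.mpr (hsin x hx)
  simpa using tendsto_integral_mul_dirichletKernel hq hcont.intervalIntegrable

theorem tendsto_integral_dirichletKernel {q δ : ℝ} (hq : 0 < q) (hδ : 0 < δ)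
    (hδq : δ ≤ 1 / (2 * q)) :
    Tendsto (fun M : ℕ => ∫ x in -δ..δ, (dirichletKernel q M x : ℂ)) atTop (𝓝 (1 / q)) := by
  set c := 1 / (2 * q)
  have hsin : ∀ x, δ ≤ |x| → |x| ≤ c → sin (π * q * x) ≠ 0 := fun x hδx hxc =>
    abs_pos.mp <| (by positivity : 0 < 2 * q * δ).trans_le <|
      (by gcongr : 2 * q * δ ≤ 2 * q * |x|).trans (two_mul_abs_le_abs_sin_pi_mul hq hxc)
  have hleft := tendsto_integral_dirichletKernel_of_sin_ne_zero (a := -c) (b := -δ) hq.ne'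
    fun x hx => by
      rw [Set.uIcc_of_le (by linarith)] at hx
      obtain ⟨hcx, hxδ⟩ := hx
      exact hsin x (le_abs.mpr (Or.inr (by linarith))) (abs_le.mpr ⟨hcx, by linarith⟩)
  have hright := tendsto_integral_dirichletKernel_of_sin_ne_zero (a := δ) (b := c) hq.ne'
    fun x hx => by
      rw [Set.uIcc_of_le hδq] at hx
      obtain ⟨hδx, hxc⟩ := hx
      exact hsin x (le_abs.mpr (Or.inl hδx)) (abs_le.mpr ⟨by linarith, hxc⟩)
  have hsplit : ∀ M : ℕ, ∫ x in -δ..δ, (dirichletKernel q M x : ℂ) =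
      1 / q - (∫ x in -c..-δ, (dirichletKernel q M x : ℂ)) -
        ∫ x in δ..c, (dirichletKernel q M x : ℂ) := by
    intro M
    have hI := intervalIntegrable_dirichletKernel hq.ne' M
    have h1 := intervalIntegral.integral_add_adjacent_intervals (hI (-c) (-δ)) (hI (-δ) δ)
    have h2 := intervalIntegral.integral_add_adjacent_intervals (hI (-c) δ) (hI δ c)
    have h3 : ∫ x in -c..c, dirichletKernel q M x = 1 / q := integral_dirichletKernel hq.ne' M
    simp only [intervalIntegral.integral_ofReal]
    exact_mod_cast (by linarith : ∫ x in -δ..δ, dirichletKernel q M x =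
      1 / q - (∫ x in -c..-δ, dirichletKernel q M x) - ∫ x in δ..c, dirichletKernel q M x)
  simp_rw [hsplit]
  simpa using ((tendsto_const_nhds (x := (1 / q : ℂ))).sub hleft).sub hright

theorem tendsto_integral_exp_mul_dirichletKernel {q δ : ℝ} (hq : 0 < q) (hδ : 0 < δ)
    (hδq : δ ≤ 1 / (2 * q)) (a : ℝ) :
    Tendsto (fun M : ℕ => ∫ x in -δ..δ,
      Complex.exp (2 * π * Complex.I * a * x) * dirichletKernel q M x) atTop (𝓝 (1 / q)) := by
  set e : ℝ → ℂ := fun x => Complex.exp (2 * π * Complex.I * a * x)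
  have hbdd : IntervalIntegrable (fun x => (e x - 1) / sin (π * q * x)) volume (-δ) δ := by
    refine (intervalIntegrable_const (c := π * |a| / q)).mono_fun' ?_
      (ae_restrict_of_forall_mem measurableSet_uIoc fun x hx => ?_)
    · exact ((by fun_prop : Continuous fun x => e x - 1).measurable.div
        (by fun_prop : Continuous fun x => (sin (π * q * x) : ℂ)).measurable).aestronglyMeasurable
    · rw [Set.uIoc_of_le (by linarith)] at hx
      obtain ⟨hδx, hxδ⟩ := hx
      exact norm_exp_sub_one_div_sin_le hq (abs_le.mpr ⟨by linarith, by linarith⟩) a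
  have hsplit : ∀ M : ℕ, ∫ x in -δ..δ, e x * dirichletKernel q M x =
      (∫ x in -δ..δ, (e x - 1) * dirichletKernel q M x) +
        ∫ x in -δ..δ, (dirichletKernel q M x : ℂ) := by
    intro M
    have hD := intervalIntegrable_dirichletKernel hq.ne' M (-δ) δ
    have hI : IntervalIntegrable (fun x => (dirichletKernel q M x : ℂ)) volume (-δ) δ :=
      ⟨hD.1.ofReal, hD.2.ofReal⟩
    rw [← intervalIntegral.integral_add (hI.continuousOn_mul (by fun_prop)) hI]
    congr 1 with x
    ring
  have h := (tendsto_integral_mul_dirichletKernel hq.ne' hbdd).add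
    (tendsto_integral_dirichletKernel hq hδ hδq)
  rw [zero_add] at h
  exact h.congr fun M => (hsplit M).symm

theorem dirichlet_kernel_localization_general (q r : ℕ) (hq : 1 ≤ q)
    (a : ℝ) (δ : ℝ) (hδ0 : 0 < δ) (hδ1 : δ < 1 / (2 * q)) :
    Filter.Tendsto (fun M : ℕ =>
        ∫ x in ((r : ℝ) / q - δ)..((r : ℝ) / q + δ),
          Complex.exp (2 * Real.pi * Complex.I * a * x) *
            ((Real.sin ((2 * M + 1) * Real.pi * q * x) / Real.sin (Real.pi * q * x) : ℝ) : ℂ))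
      Filter.atTop
      (nhds ((1 / (q : ℂ)) * Complex.exp (2 * Real.pi * Complex.I * a * r / q))) := by
  have hq0 : (0 : ℝ) < q := by exact_mod_cast hq
  set c := Complex.exp (2 * π * Complex.I * a * r / q)
  have hshift : ∀ M : ℕ, ∫ x in (r / q - δ : ℝ)..(r / q + δ),
      Complex.exp (2 * π * Complex.I * a * x) * dirichletKernel q M x =
      c * ∫ x in -δ..δ, Complex.exp (2 * π * Complex.I * a * x) * dirichletKernel q M x := by
    intro M
    rw [← intervalIntegral.integral_const_mul, sub_eq_neg_add, add_comm _ δ,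
      ← intervalIntegral.integral_comp_add_right]
    refine intervalIntegral.integral_congr fun x _ => ?_
    have hper := dirichletKernel_add_int_div hq0.ne' M r x
    rw [Int.cast_natCast] at hper
    rw [hper, show 2 * π * Complex.I * a * ((x + r / q : ℝ) : ℂ) =
        2 * π * Complex.I * a * r / q + 2 * π * Complex.I * a * x by push_cast; ring,
      Complex.exp_add]
    ring
  have h := (tendsto_integral_exp_mul_dirichletKernel hq0 hδ0 hδ1.le a).const_mul c
  rw [Complex.ofReal_natCast, mul_comm c] at h
  exact h.congr fun M => (hshift M).symm

/-- The localization computation in the proof of the paper's Theorem 3: for integers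
`q, r ≥ 1` and `0 < δ < 1/(2q)`,
`lim_{M→∞} ∫_{r/q-δ}^{r/q+δ} e^{2πiax} sin((2M+1)πqx)/sin(πqx) dx = (1/q) e^{2πiar/q}`. -/
theorem dirichlet_kernel_localization (q r : ℕ) (hq : 1 ≤ q) (hr : 1 ≤ r)
    (a : ℝ) (δ : ℝ) (hδ0 : 0 < δ) (hδ1 : δ < 1 / (2 * q)) :
    Filter.Tendsto (fun M : ℕ =>
        ∫ x in ((r : ℝ) / q - δ)..((r : ℝ) / q + δ),
          Complex.exp (2 * Real.pi * Complex.I * a * x) *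
            ((Real.sin ((2 * M + 1) * Real.pi * q * x) / Real.sin (Real.pi * q * x) : ℝ) : ℂ))
      Filter.atTop
      (nhds ((1 / (q : ℂ)) * Complex.exp (2 * Real.pi * Complex.I * a * r / q))) :=
  dirichlet_kernel_localization_general q r hq a δ hδ0 hδ1
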